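/- Prefix from freshness in a conflict-free term: suppose logs L_u and L_v have nondecreasing terms and agree on all entries with term equal to t_v (no conflict within term t_v), the last entry of L_v has term t_v, and some entry of L_u at term t_v has index at least the index of the last entry of L_v. If all entries of L_v at each term agree with L_u, then L_v is a prefix of L_u. -/

import Mathlib

structure LogEntry where
  term : ℕ
  index : ℕ
deriving DecidableEq

theorem prefix_from_freshness (Lu Lv : List LogEntry) (tv : ℕ)
    (hmonu : List.Chain' (fun a b => a.term ≤ b.term) Lu)
    (hmonv : List.Chain' (fun a b => a.term ≤ b.term) Lv)
    (hidxu : ∀ i (hi : i < Lu.length), (Lu.get ⟨i, hi⟩).index = i)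
    (hidxv : ∀ i (hi : i < Lv.length), (Lv.get ⟨i, hi⟩).index = i)
    (hvne : Lv ≠ [])
    (hlast : (Lv.getLast hvne).term = tv)
    (hfresh : ∃ e ∈ Lu, e.term = tv ∧ (Lv.getLast hvne).index ≤ e.index)
    (hagree : ∀ t, t ≤ tv →
      Lu.filter (fun e => e.term = t) = Lv.filter (fun e => e.term = t)) :
    Lv <+: Lu := by
  have : IsTrans LogEntry fun a b => a.term ≤ b.term := ⟨fun _ _ _ => le_trans⟩
  have hpw : Lv.Pairwise (fun a b => a.term ≤ b.term) :=
    List.isChain_iff_pairwise.mp hmonv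
  -- every term in Lv is ≤ tv
  have hterm_le : ∀ i (hi : i < Lv.length), (Lv.get ⟨i, hi⟩).term ≤ tv := by
    intro i hi
    have hlen : Lv.length - 1 < Lv.length := by
      have := List.length_pos_iff.mpr hvne; omega
    have hgl : Lv.getLast hvne = Lv.get ⟨Lv.length - 1, hlen⟩ :=
      List.getLast_eq_getElem _
    rcases eq_or_lt_of_le (Nat.le_pred_of_lt hi) with h | h
    · have h' : i = Lv.length - 1 := h
      subst h'
      rw [← hlast, hgl]
    · have := List.pairwise_iff_get.mp hpw ⟨i, hi⟩ ⟨Lv.length - 1, hlen⟩ h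
      rw [← hlast, hgl]; exact this
  -- key: each entry of Lv appears at the same position in Lu
  have key : ∀ i (hi : i < Lv.length), ∃ hi' : i < Lu.length,
      Lu.get ⟨i, hi'⟩ = Lv.get ⟨i, hi⟩ := by
    intro i hi
    set e := Lv.get ⟨i, hi⟩ with he
    have hmemv : e ∈ Lv.filter (fun x => x.term = e.term) := by
      rw [List.mem_filter]
      exact ⟨List.get_mem _ _, by simp⟩
    have hmemu : e ∈ Lu := by
      have := hagree e.term (hterm_le i hi)
      rw [← this] at hmemv
      exact List.mem_of_mem_filter hmemv
    obtain ⟨⟨j, hj⟩, hje⟩ := List.mem_iff_get.mp hmemu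
    have hji : j = i := by
      have h1 := hidxu j hj
      have h2 := hidxv i hi
      rw [hje] at h1
      rw [← he] at h2
      omega
    subst hji
    exact ⟨hj, hje⟩
  have hlen : Lv.length ≤ Lu.length := by
    have hlt : Lv.length - 1 < Lv.length := by
      have := List.length_pos_iff.mpr hvne; omega
    obtain ⟨hi', _⟩ := key (Lv.length - 1) hlt
    omega
  rw [List.prefix_iff_eq_take]
  apply List.ext_get
  · simp [hlen]
  · intro n h1 h2
    have h1' : n < Lv.length := h1
    obtain ⟨hi', heq⟩ := key n h1'
    simp only [List.get_eq_getElem, List.getElem_take]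
    exact heq.symm
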